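/- If B ⊆ (0,∞) is a Borel set with positive Lebesgue measure on every interval (0,d) (i.e., Leb(B ∩ (0,d)) > 0 for all d > 0) and B + B ⊆ B, then B = (0, ∞). -/

import Mathlib

/-!
By Steinhaus, `A + A` contains an interval for `A = B ∩ (0, x/2)`, so `B` contains an interval
`(u, v)` with `u < x`. Since `B` has arbitrarily small elements, their multiples make `B` meet
every interval `(p, q)` with `0 ≤ p`; then for `y > u` some `c ∈ B` lies in `(y - v, y - u)`,
and `y = (y - c) + c ∈ B + B`.
-/

open MeasureTheory Pointwise Filter Topology Set Metric

theorem Real.exists_tendsto_volume_inter_closedBall_div {E : Set ℝ} (hE : volume E ≠ 0) :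
    ∃ a, Tendsto (fun r => volume (E ∩ closedBall a r) / volume (closedBall a r))
      (𝓝[>] 0) (𝓝 1) := by
  have : (ae (volume.restrict E)).NeBot := ae_neBot.2 (by rwa [Ne, Measure.restrict_eq_zero])
  exact (Besicovitch.ae_tendsto_measure_inter_div volume E).exists

theorem Real.ofReal_lt_volume_inter_closedBall {E : Set ℝ} {a r c : ℝ} (hr : 0 < r)
    (hc : 0 ≤ c) (h : ENNReal.ofReal c < volume (E ∩ closedBall a r) / volume (closedBall a r)) :
    ENNReal.ofReal (2 * c * r) < volume (E ∩ closedBall a r) := by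
  rwa [Real.volume_closedBall, ENNReal.lt_div_iff_mul_lt
    (Or.inl (by simpa using hr)) (Or.inl ENNReal.ofReal_ne_top), ← ENNReal.ofReal_mul hc,
    ← mul_assoc, mul_comm c] at h

theorem Real.exists_Ioo_subset_add {E F : Set ℝ} (hE : MeasurableSet E) (hE₀ : volume E ≠ 0)
    (hF₀ : volume F ≠ 0) : ∃ u v, u < v ∧ Ioo u v ⊆ E + F := by
  -- Near density points `a`, `b` of `E`, `F` and for `t` close to `a + b`, the sets
  -- `E ∩ [a - r, a + r]` and `t - (F ∩ [b - r, b + r])` each fill more than half of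
  -- `[a - 3r/2, a + 3r/2]`, so they meet.
  obtain ⟨a, ha⟩ := Real.exists_tendsto_volume_inter_closedBall_div hE₀
  obtain ⟨b, hb⟩ := Real.exists_tendsto_volume_inter_closedBall_div hF₀
  have h34 : ENNReal.ofReal (3 / 4) < 1 := by norm_num
  obtain ⟨r, ⟨haE, hbF⟩, hr : 0 < r⟩ := (((ha.eventually (lt_mem_nhds h34)).and
    (hb.eventually (lt_mem_nhds h34))).and self_mem_nhdsWithin).exists
  refine ⟨a + b - r / 2, a + b + r / 2, by linarith, fun t ⟨ht₁, ht₂⟩ => ?_⟩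
  set S := E ∩ closedBall a r
  set T := (t - ·) ⁻¹' (F ∩ closedBall b r)
  have hS : S ⊆ closedBall a (3 / 2 * r) :=
    inter_subset_right.trans (closedBall_subset_closedBall (by linarith))
  have hT : T ⊆ closedBall a (3 / 2 * r) := by
    intro s ⟨_, hs⟩
    rw [mem_closedBall, Real.dist_eq, abs_le] at hs ⊢
    constructor <;> linarith [hs.1, hs.2]
  have hvolT : volume T = volume (F ∩ closedBall b r) :=
    (Measure.measurePreserving_sub_left volume t).measure_preimage_equiv
      (f := MeasurableEquiv.subLeft t) _
  have hlt : volume (closedBall a (3 / 2 * r)) < volume S + volume T := by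
    rw [Real.volume_closedBall, hvolT]
    calc ENNReal.ofReal (2 * (3 / 2 * r))
        = ENNReal.ofReal (2 * (3 / 4) * r) + ENNReal.ofReal (2 * (3 / 4) * r) := by
          rw [← ENNReal.ofReal_add (by positivity) (by positivity)]; ring_nf
      _ < volume S + volume (F ∩ closedBall b r) := ENNReal.add_lt_add
          (Real.ofReal_lt_volume_inter_closedBall hr (by norm_num) haE)
          (Real.ofReal_lt_volume_inter_closedBall hr (by norm_num) hbF)
  obtain ⟨s, hsS, hsT⟩ :=
    nonempty_inter_of_measure_lt_add' volume (hE.inter measurableSet_closedBall) hS hT hlt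
  simpa using add_mem_add hsS.1 hsT.1

theorem succ_nsmul_mem_of_add_subset {M : Type*} [AddMonoid M] {B : Set M} (hadd : B + B ⊆ B)
    {b : M} (hb : b ∈ B) (n : ℕ) : (n + 1) • b ∈ B := by
  induction n with
  | zero => simpa using hb
  | succ n ih => rw [succ_nsmul]; exact hadd (add_mem_add ih hb)

section AddClosed

variable {B : Set ℝ} (hadd : B + B ⊆ B) (hsmall : ∀ d > 0, (B ∩ Ioo 0 d).Nonempty)
include hadd hsmall

-- Some multiple of an element of `B` smaller than `q - p` lands in `(p, q)`.
theorem inter_Ioo_nonempty_of_add_subset {p q : ℝ} (hp : 0 ≤ p) (hpq : p < q) :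
    (B ∩ Ioo p q).Nonempty := by
  obtain ⟨b, hbB, hb₀, hbq⟩ := hsmall (q - p) (by linarith)
  have hmem := succ_nsmul_mem_of_add_subset hadd hbB ⌊p / b⌋₊
  rw [nsmul_eq_mul] at hmem
  have hlt : p / b < ⌊p / b⌋₊ + 1 := Nat.lt_floor_add_one _
  have hle : (⌊p / b⌋₊ : ℝ) ≤ p / b := Nat.floor_le (div_nonneg hp hb₀.le)
  rw [div_lt_iff₀ hb₀] at hlt
  rw [le_div_iff₀ hb₀] at hle
  exact ⟨_, hmem, by push_cast; linarith, by push_cast; linarith⟩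

theorem Ioi_subset_of_Ioo_subset_of_add_subset {u v : ℝ} (huv : u < v) (hIoo : Ioo u v ⊆ B) :
    Ioi u ⊆ B := by
  intro y (hy : u < y)
  obtain ⟨c, hcB, hc₁, hc₂⟩ := inter_Ioo_nonempty_of_add_subset hadd hsmall
    (le_max_left 0 (y - v)) (q := y - u) (max_lt (by linarith) (by linarith))
  have hyc : y - c ∈ B := hIoo ⟨by linarith, by linarith [le_max_right 0 (y - v)]⟩
  simpa using hadd (add_mem_add hyc hcB)

end AddClosed

/-- If `B ⊆ (0,∞)` is a Borel set with `Leb(B ∩ (0,d)) > 0` for every `d > 0` and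
`B + B ⊆ B`, then `B = (0,∞)`. -/
theorem stmt11 (B : Set ℝ) (hB : B ⊆ Set.Ioi 0) (hmeas : MeasurableSet B)
    (hpos : ∀ d : ℝ, 0 < d → 0 < volume (B ∩ Set.Ioo 0 d))
    (hadd : B + B ⊆ B) :
    B = Set.Ioi 0 := by
  have hsmall : ∀ d > 0, (B ∩ Ioo 0 d).Nonempty := fun d hd =>
    nonempty_of_measure_ne_zero (hpos d hd).ne'
  refine hB.antisymm fun x (hx : 0 < x) => ?_
  set A := B ∩ Ioo 0 (x / 2)
  have hA₀ : volume A ≠ 0 := (hpos _ (half_pos hx)).ne'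
  obtain ⟨u, v, huv, hIoo⟩ :=
    Real.exists_Ioo_subset_add (hmeas.inter measurableSet_Ioo) hA₀ hA₀
  have hAA : A + A ⊆ B ∩ Ioo 0 x := by
    rintro _ ⟨p, ⟨hpB, hp₀, hpx⟩, q, ⟨hqB, hq₀, hqx⟩, rfl⟩
    exact ⟨hadd (add_mem_add hpB hqB), by linarith, by linarith⟩
  have hux : u < x := by
    have hmid : (u + v) / 2 ∈ Ioo u v :=
      ⟨left_lt_add_div_two.2 huv, add_div_two_lt_right.2 huv⟩
    linarith [hmid.1, (hAA (hIoo hmid)).2.2]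
  exact Ioi_subset_of_Ioo_subset_of_add_subset hadd hsmall huv
    (hIoo.trans (hAA.trans inter_subset_left)) hux
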